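/- Let B be a strict 2-category that is locally semiadditive and compositionally distributive (hom-categories have zero objects, zero morphisms and binary biproducts; 2-morphism hom-sets are commutative additive monoids with zero given by the zero 2-morphism; vertical composition is additive in each argument; whiskering by any 1-morphism preserves addition and zero; and biprod.fst ≫ biprod.inl + biprod.snd ≫ biprod.inr = 𝟙 (u ⊞ v) for all parallel u, v). Let (P, p_A : P ⟶ A, p_B : P ⟶ B) be a weak 2-product of objects A and B: (existence) for every X, f : X ⟶ A, g : X ⟶ B there exist b : X ⟶ P and invertible 2-morphisms b ≫ p_A ≅ f and b ≫ p_B ≅ g; (2-dimensional universality) for all b, b' : X ⟶ P and all 2-morphisms Σ_A : b ≫ p_A ⟶ b' ≫ p_A, Σ_B : b ≫ p_B ⟶ b' ≫ p_B there exists a unique γ : b ⟶ b' with γ ▷ p_A = Σ_A and γ ▷ p_B = Σ_B. Then P carries the structure of a weak 2-biproduct: there exist 1-morphisms i_A : A ⟶ P, i_B : B ⟶ P, invertible 2-morphisms θ_A : i_A ≫ p_A ≅ 𝟙 A, θ_B : i_B ≫ p_B ≅ 𝟙 B, θ_{BA} : i_A ≫ p_B ≅ 0_{A,B}, θ_{AB}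 : i_B ≫ p_A ≅ 0_{B,A} (where 0 denotes a zero object of the relevant hom-category), and an invertible 2-morphism θ_P : (p_A ≫ i_A) ⊞ (p_B ≫ i_B) ≅ 𝟙 P in the hom-category P ⟶ P. -/

import Mathlib

open CategoryTheory CategoryTheory.Limits
open scoped CategoryTheory.Bicategory
open scoped ZeroObject

/-- In a locally semiadditive and compositionally distributive 2-category, a weak 2-product
carries the structure of a weak 2-biproduct. -/
theorem weak_two_product_gives_weak_two_biproduct
    {B : Type*} [Bicategory B] [Bicategory.Strict B]
    [∀ a b : B, HasZeroMorphisms (a ⟶ b)]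
    [∀ a b : B, HasBinaryBiproducts (a ⟶ b)]
    [∀ a b : B, HasZeroObject (a ⟶ b)]
    -- the commutative monoid addition on 2-morphisms, with zero the zero 2-morphism
    (add : ∀ {a b : B} {u v : a ⟶ b}, (u ⟶ v) → (u ⟶ v) → (u ⟶ v))
    (add_comm' : ∀ {a b : B} {u v : a ⟶ b} (η θ : u ⟶ v), add η θ = add θ η)
    (add_assoc' : ∀ {a b : B} {u v : a ⟶ b} (η θ ζ : u ⟶ v),
      add (add η θ) ζ = add η (add θ ζ))
    (zero_add' : ∀ {a b : B} {u v : a ⟶ b} (η : u ⟶ v), add 0 η = η)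
    (add_zero' : ∀ {a b : B} {u v : a ⟶ b} (η : u ⟶ v), add η 0 = η)
    -- vertical composition is additive in each argument
    (comp_add : ∀ {a b : B} {u v w : a ⟶ b} (ζ : u ⟶ v) (η θ : v ⟶ w),
      ζ ≫ add η θ = add (ζ ≫ η) (ζ ≫ θ))
    (add_comp : ∀ {a b : B} {u v w : a ⟶ b} (η θ : u ⟶ v) (ζ : v ⟶ w),
      add η θ ≫ ζ = add (η ≫ ζ) (θ ≫ ζ))
    -- whiskering preserves addition and zero 2-morphisms
    (whiskerRight_add : ∀ {a b c : B} {u v : a ⟶ b} (η θ : u ⟶ v) (f : b ⟶ c),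
      add η θ ▷ f = add (η ▷ f) (θ ▷ f))
    (whiskerLeft_add : ∀ {a b c : B} (f : a ⟶ b) {u v : b ⟶ c} (η θ : u ⟶ v),
      f ◁ add η θ = add (f ◁ η) (f ◁ θ))
    (whiskerRight_zero : ∀ {a b c : B} {u v : a ⟶ b} (f : b ⟶ c),
      (0 : u ⟶ v) ▷ f = 0)
    (whiskerLeft_zero : ∀ {a b c : B} (f : a ⟶ b) (u v : b ⟶ c),
      f ◁ (0 : u ⟶ v) = 0)
    -- totality of binary biproducts in the hom-categories
    (total : ∀ {a b : B} (u v : a ⟶ b),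
      add (biprod.fst ≫ biprod.inl) (biprod.snd ≫ biprod.inr) = 𝟙 (u ⊞ v))
    -- a weak 2-product `(P, pA, pB)` of `A₀` and `B₀`
    {P A₀ B₀ : B} (pA : P ⟶ A₀) (pB : P ⟶ B₀)
    -- existence part of the universal property
    (hexist : ∀ {X : B} (f : X ⟶ A₀) (g : X ⟶ B₀),
      ∃ b : X ⟶ P, Nonempty (b ≫ pA ≅ f) ∧ Nonempty (b ≫ pB ≅ g))
    -- 2-dimensional universality
    (huniv : ∀ {X : B} (b b' : X ⟶ P)
      (SA : b ≫ pA ⟶ b' ≫ pA) (SB : b ≫ pB ⟶ b' ≫ pB),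
      ∃! γ : b ⟶ b', γ ▷ pA = SA ∧ γ ▷ pB = SB) :
    ∃ (iA : A₀ ⟶ P) (iB : B₀ ⟶ P),
      Nonempty (iA ≫ pA ≅ 𝟙 A₀) ∧ Nonempty (iB ≫ pB ≅ 𝟙 B₀) ∧
        Nonempty (iA ≫ pB ≅ (0 : A₀ ⟶ B₀)) ∧ Nonempty (iB ≫ pA ≅ (0 : B₀ ⟶ A₀)) ∧
          Nonempty (((pA ≫ iA) ⊞ (pB ≫ iB) : P ⟶ P) ≅ 𝟙 P) := by
  obtain ⟨iA, ⟨θA⟩, ⟨θBA⟩⟩ := hexist (𝟙 A₀) (0 : A₀ ⟶ B₀)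
  obtain ⟨iB, ⟨θAB⟩, ⟨θB⟩⟩ := hexist (0 : B₀ ⟶ A₀) (𝟙 B₀)
  refine ⟨iA, iB, ⟨θA⟩, ⟨θB⟩, ⟨θBA⟩, ⟨θAB⟩, ?_⟩
  set s : P ⟶ P := (pA ≫ iA) ⊞ (pB ≫ iB) with hs
  -- the comparison 2-morphisms
  let SA : s ≫ pA ⟶ 𝟙 P ≫ pA :=
    biprod.fst ▷ pA ≫ (α_ pA iA pA).hom ≫ pA ◁ θA.hom ≫ (ρ_ pA).hom ≫ (λ_ pA).inv
  let SB : s ≫ pB ⟶ 𝟙 P ≫ pB :=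
    biprod.snd ▷ pB ≫ (α_ pB iB pB).hom ≫ pB ◁ θB.hom ≫ (ρ_ pB).hom ≫ (λ_ pB).inv
  let TA : 𝟙 P ≫ pA ⟶ s ≫ pA :=
    (λ_ pA).hom ≫ (ρ_ pA).inv ≫ pA ◁ θA.inv ≫ (α_ pA iA pA).inv ≫ biprod.inl ▷ pA
  let TB : 𝟙 P ≫ pB ⟶ s ≫ pB :=
    (λ_ pB).hom ≫ (ρ_ pB).inv ≫ pB ◁ θB.inv ≫ (α_ pB iB pB).inv ≫ biprod.inr ▷ pB
  obtain ⟨γ, ⟨hγA, hγB⟩, -⟩ := huniv s (𝟙 P) SA SB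
  obtain ⟨δ, ⟨hδA, hδB⟩, -⟩ := huniv (𝟙 P) s TA TB
  -- identity of a 1-morphism isomorphic (after whiskering) to a zero object is zero
  have hidA : 𝟙 (iB ≫ pA) = 0 := by
    rw [← θAB.hom_inv_id, ← Category.id_comp θAB.inv, Limits.id_zero, zero_comp, comp_zero]
  have hidB : 𝟙 (iA ≫ pB) = 0 := by
    rw [← θBA.hom_inv_id, ← Category.id_comp θBA.inv, Limits.id_zero, zero_comp, comp_zero]
  have hinr : (biprod.inr : pB ≫ iB ⟶ s) ▷ pA = 0 := by
    have : (biprod.inr : pB ≫ iB ⟶ s) ▷ pA =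
        (α_ pB iB pA).hom ≫ pB ◁ 𝟙 (iB ≫ pA) ≫ (α_ pB iB pA).inv ≫ biprod.inr ▷ pA := by
      simp
    rw [this, hidA, whiskerLeft_zero, zero_comp, comp_zero]
  have hinl : (biprod.inl : pA ≫ iA ⟶ s) ▷ pB = 0 := by
    have : (biprod.inl : pA ≫ iA ⟶ s) ▷ pB =
        (α_ pA iA pB).hom ≫ pA ◁ 𝟙 (iA ≫ pB) ≫ (α_ pA iA pB).inv ≫ biprod.inl ▷ pB := by
      simp
    rw [this, hidB, whiskerLeft_zero, zero_comp, comp_zero]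
  -- δ ≫ γ = 𝟙 (𝟙 P)
  have h1 : δ ≫ γ = 𝟙 (𝟙 P) := by
    obtain ⟨eps, -, hu⟩ := huniv (𝟙 P) (𝟙 P) (𝟙 (𝟙 P ≫ pA)) (𝟙 (𝟙 P ≫ pB))
    have e1 : δ ≫ γ = eps := by
      refine hu _ ⟨?_, ?_⟩
      · rw [Bicategory.comp_whiskerRight, hδA, hγA]
        simp only [TA, SA, Category.assoc]
        slice_lhs 5 6 => rw [← Bicategory.comp_whiskerRight, biprod.inl_fst]
        simp
      · rw [Bicategory.comp_whiskerRight, hδB, hγB]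
        simp only [TB, SB, Category.assoc]
        slice_lhs 5 6 => rw [← Bicategory.comp_whiskerRight, biprod.inr_snd]
        simp
    have e2 : 𝟙 (𝟙 P) = eps := by
      refine hu _ ⟨?_, ?_⟩ <;> simp
    rw [e1, e2]
  -- γ ≫ δ = 𝟙 s
  have h2 : γ ≫ δ = 𝟙 s := by
    obtain ⟨eps, -, hu⟩ := huniv s s ((biprod.fst ≫ biprod.inl) ▷ pA)
      ((biprod.snd ≫ biprod.inr) ▷ pB)
    have e1 : γ ≫ δ = eps := by
      refine hu _ ⟨?_, ?_⟩
      · rw [Bicategory.comp_whiskerRight, hγA, hδA, Bicategory.comp_whiskerRight]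
        simp only [SA, TA, Category.assoc]
        simp
      · rw [Bicategory.comp_whiskerRight, hγB, hδB, Bicategory.comp_whiskerRight]
        simp only [SB, TB, Category.assoc]
        simp
    have e2 : 𝟙 s = eps := by
      refine hu _ ⟨?_, ?_⟩
      · rw [← total (pA ≫ iA) (pB ≫ iB), whiskerRight_add,
          Bicategory.comp_whiskerRight (biprod.snd) (biprod.inr) pA, hinr, comp_zero,
          add_zero']
      · rw [← total (pA ≫ iA) (pB ≫ iB), whiskerRight_add,
          Bicategory.comp_whiskerRight (biprod.fst) (biprod.inl) pB, hinl, comp_zero,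
          zero_add']
    rw [e1, e2]
  exact ⟨⟨γ, δ, h2, h1⟩⟩
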